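/- arXiv:2404.16736 — 3 statements merged into one kernel-verified Lean document; each statement's English description precedes it below -/
import Mathlib

section
/- Given groups G₁, G₂, subgroups G₁₁ ≤ G₁, G₂₁ ≤ G₂, normal subgroups G₁₂ ⊴ G₁₁, G₂₂ ⊴ G₂₁, and a group isomorphism ψ : G₁₁/G₁₂ ≅ G₂₁/G₂₂, let H = {(g₁,g₂) ∈ G₁₁ × G₂₁ | ψ(g₁G₁₂) = g₂G₂₂} be the associated Goursat subgroup of G₁ × G₂. Then the index of H in G₁ × G₂ satisfies [G₁ × G₂ : H] = [G₁ : G₁₁] · [G₂ : G₂₂] = [G₁ : G₁₂] · [G₂ : G₂₁], where indices are natural numbers with the convention that an infinite index equals 0 (and the identities hold in all cases, finite or infinite). -/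
/-- The Goursat subgroup of `G₁ × G₂` associated to a Goursat quintuple
`(G₁₁, G₁₂, G₂₁, G₂₂, ψ)`: it consists of the pairs `(g₁, g₂) ∈ G₁₁ × G₂₁` such that
`ψ (g₁ G₁₂) = g₂ G₂₂`. It is obtained as the image in `G₁ × G₂` of the preimage of the
graph of `ψ` under the quotient map `G₁₁ × G₂₁ → (G₁₁/G₁₂) × (G₂₁/G₂₂)`. -/
def goursatSubgroup {G₁ G₂ : Type*} [Group G₁] [Group G₂]
    (G₁₁ : Subgroup G₁) (G₂₁ : Subgroup G₂)
    (G₁₂ : Subgroup G₁₁) [G₁₂.Normal] (G₂₂ : Subgroup G₂₁) [G₂₂.Normal]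
    (ψ : (G₁₁ ⧸ G₁₂) ≃* (G₂₁ ⧸ G₂₂)) : Subgroup (G₁ × G₂) :=
  Subgroup.map (G₁₁.subtype.prodMap G₂₁.subtype)
    (Subgroup.comap ((QuotientGroup.mk' G₁₂).prodMap (QuotientGroup.mk' G₂₂))
      ((MonoidHom.id (G₁₁ ⧸ G₁₂)).prod ψ.toMonoidHom).range)

private lemma aux_inv_mul {B : Type*} [Group B] (a b c d : B) :
    a⁻¹ * b = c⁻¹ * d ↔ b * d⁻¹ = a * c⁻¹ := by
  constructor <;> intro h
  · have := congrArg (fun t => a * t * d⁻¹) h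
    simpa [mul_assoc] using this
  · have := congrArg (fun t => a⁻¹ * t * d) h
    simpa [mul_assoc] using this

/-- The index of the graph of an isomorphism `ψ : A ≃* B` inside `A × B` is `Nat.card B`. -/
lemma graph_range_index {A B : Type*} [Group A] [Group B] (ψ : A ≃* B) :
    ((MonoidHom.id A).prod ψ.toMonoidHom).range.index = Nat.card B := by
  set Γ := ((MonoidHom.id A).prod ψ.toMonoidHom).range with hΓ
  have key : ∀ x y : A × B,
      (QuotientGroup.leftRel Γ) x y ↔ x.2 * (ψ x.1)⁻¹ = y.2 * (ψ y.1)⁻¹ := by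
    intro x y
    rw [QuotientGroup.leftRel_apply]
    constructor
    · rintro ⟨a, ha⟩
      have h1 : a = x.1⁻¹ * y.1 := congrArg Prod.fst ha
      have h2 : ψ a = x.2⁻¹ * y.2 := congrArg Prod.snd ha
      rw [h1, map_mul, map_inv] at h2
      exact ((aux_inv_mul _ _ _ _).mp h2.symm).symm
    · intro h
      refine ⟨x.1⁻¹ * y.1, Prod.ext rfl ?_⟩
      show ψ (x.1⁻¹ * y.1) = x.2⁻¹ * y.2
      rw [map_mul, map_inv]
      exact ((aux_inv_mul _ _ _ _).mpr h.symm).symm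
  rw [Subgroup.index_eq_card]
  refine Nat.card_congr (Equiv.ofBijective
    (Quotient.lift (fun p : A × B => p.2 * (ψ p.1)⁻¹)
      (fun x y h => (key x y).mp h)) ⟨?_, ?_⟩)
  · intro q1 q2
    refine Quotient.inductionOn₂ q1 q2 ?_
    intro x y h
    exact Quotient.sound ((key x y).mpr h)
  · intro b
    exact ⟨Quotient.mk _ (1, b), by simp⟩

lemma graph_range_index' {A B : Type*} [Group A] [Group B] (ψ : A ≃* B) :
    ((MonoidHom.id A).prod ψ.toMonoidHom).range.index = Nat.card A := by
  rw [graph_range_index, Nat.card_congr ψ.toEquiv.symm]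

lemma range_prodMap' {A B C D : Type*} [Group A] [Group B] [Group C] [Group D]
    (f : A →* B) (g : C →* D) : (f.prodMap g).range = f.range.prod g.range := by
  ext ⟨b, d⟩
  simp only [MonoidHom.mem_range, Subgroup.mem_prod, Prod.ext_iff, MonoidHom.coe_prodMap, Prod.map_apply]
  constructor
  · rintro ⟨⟨a, c⟩, h1, h2⟩
    exact ⟨⟨a, h1⟩, ⟨c, h2⟩⟩
  · rintro ⟨⟨a, h1⟩, ⟨c, h2⟩⟩
    exact ⟨(a, c), h1, h2⟩

/-- Goursat index formula: the index of the Goursat subgroup `H` in `G₁ × G₂` equals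
`[G₁ : G₁₁] · [G₂ : G₂₂]` and also `[G₁ : G₁₂] · [G₂ : G₂₁]`, where `G₁₂` and `G₂₂`
are viewed as subgroups of `G₁` and `G₂` respectively (indices are natural numbers,
with the convention that an infinite index equals `0`). -/
theorem goursatSubgroup_index {G₁ G₂ : Type*} [Group G₁] [Group G₂]
    (G₁₁ : Subgroup G₁) (G₂₁ : Subgroup G₂)
    (G₁₂ : Subgroup G₁₁) [G₁₂.Normal] (G₂₂ : Subgroup G₂₁) [G₂₂.Normal]
    (ψ : (G₁₁ ⧸ G₁₂) ≃* (G₂₁ ⧸ G₂₂)) :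
    (goursatSubgroup G₁₁ G₂₁ G₁₂ G₂₂ ψ).index
        = G₁₁.index * (G₂₂.map G₂₁.subtype).index ∧
      (goursatSubgroup G₁₁ G₂₁ G₁₂ G₂₂ ψ).index
        = (G₁₂.map G₁₁.subtype).index * G₂₁.index := by
  have hinj : Function.Injective ⇑(G₁₁.subtype.prodMap G₂₁.subtype) := by
    rw [MonoidHom.coe_prodMap]
    exact (G₁₁.subtype_injective).prodMap (G₂₁.subtype_injective)
  have hsurj : Function.Surjective
      ⇑((QuotientGroup.mk' G₁₂).prodMap (QuotientGroup.mk' G₂₂)) := by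
    rw [MonoidHom.coe_prodMap]
    exact (QuotientGroup.mk'_surjective G₁₂).prodMap (QuotientGroup.mk'_surjective G₂₂)
  have hindex : (goursatSubgroup G₁₁ G₂₁ G₁₂ G₂₂ ψ).index
      = ((MonoidHom.id (G₁₁ ⧸ G₁₂)).prod ψ.toMonoidHom).range.index
        * (G₁₁.index * G₂₁.index) := by
    rw [goursatSubgroup, Subgroup.index_map_of_injective _ hinj,
      Subgroup.index_comap_of_surjective _ hsurj, range_prodMap',
      Subgroup.range_subtype, Subgroup.range_subtype, Subgroup.index_prod]
  constructor
  · rw [hindex, graph_range_index, Subgroup.index_map_subtype,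
      ← Subgroup.index_eq_card]
    ring
  · rw [hindex, graph_range_index', Subgroup.index_map_subtype,
      ← Subgroup.index_eq_card]
    ring
end

section
/- Given groups G₁, G₂, subgroups G₁₁ ≤ G₁, G₂₁ ≤ G₂, normal subgroups G₁₂ ⊴ G₁₁, G₂₂ ⊴ G₂₁, and a group isomorphism ψ : G₁₁/G₁₂ ≅ G₂₁/G₂₂, let H = {(g₁,g₂) ∈ G₁₁ × G₂₁ | ψ(g₁G₁₂) = g₂G₂₂} be the associated Goursat subgroup of G₁ × G₂. Then H is a normal subgroup of G₁ × G₂ if and only if for each i = 1, 2: both G_{i1} and G_{i2} are normal subgroups of G_i, and the image of G_{i1} in the quotient group G_i/G_{i2} is contained in the center Z(G_i/G_{i2}). -/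
lemma memMapSubtype {G : Type*} [Group G] {K : Subgroup G} {L : Subgroup K} {g : G}
    (hg : g ∈ K) : g ∈ L.map K.subtype ↔ (⟨g, hg⟩ : K) ∈ L :=
  Subgroup.mem_map_iff_mem (f := K.subtype) (x := ⟨g, hg⟩) K.subtype_injective

lemma mem_goursat {G₁ G₂ : Type*} [Group G₁] [Group G₂]
    {G₁₁ : Subgroup G₁} {G₂₁ : Subgroup G₂}
    {G₁₂ : Subgroup G₁₁} [G₁₂.Normal] {G₂₂ : Subgroup G₂₁} [G₂₂.Normal]
    {ψ : (G₁₁ ⧸ G₁₂) ≃* (G₂₁ ⧸ G₂₂)} {a : G₁} {b : G₂} :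
    (a, b) ∈ goursatSubgroup G₁₁ G₂₁ G₁₂ G₂₂ ψ ↔
    ∃ (ha : a ∈ G₁₁) (hb : b ∈ G₂₁),
      ψ (QuotientGroup.mk ⟨a, ha⟩) = QuotientGroup.mk ⟨b, hb⟩ := by
  constructor
  · rintro ⟨⟨p₁, p₂⟩, ⟨q, hq⟩, heq⟩
    simp only [Prod.mk.injEq, MonoidHom.prod_apply,
      MonoidHom.id_apply, MonoidHom.coe_prodMap, Prod.map_apply] at hq heq
    obtain ⟨h1, h2⟩ := heq
    refine ⟨h1 ▸ p₁.2, h2 ▸ p₂.2, ?_⟩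
    have e1 : (⟨a, h1 ▸ p₁.2⟩ : G₁₁) = p₁ := Subtype.ext h1.symm
    have e2 : (⟨b, h2 ▸ p₂.2⟩ : G₂₁) = p₂ := Subtype.ext h2.symm
    rw [e1, e2]
    obtain ⟨hq1, hq2⟩ := hq
    subst hq1
    exact hq2
  · rintro ⟨ha, hb, h⟩
    exact ⟨(⟨a, ha⟩, ⟨b, hb⟩), ⟨QuotientGroup.mk ⟨a, ha⟩, by simp [h]⟩, rfl⟩

/-- Normality criterion for Goursat subgroups: the Goursat subgroup `H` is normal in
`G₁ × G₂` iff for each `i = 1, 2`, both `G_{i1}` and `G_{i2}` are normal in `G_i` and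
the image of `G_{i1}` in `G_i / G_{i2}` is central, i.e. every `g ∈ G_{i1}` commutes
with every element of `G_i` modulo `G_{i2}` (the commutator `g x g⁻¹ x⁻¹` lies in
`G_{i2}`, viewed as a subgroup of `G_i`). -/
theorem goursatSubgroup_normal_iff {G₁ G₂ : Type*} [Group G₁] [Group G₂]
    (G₁₁ : Subgroup G₁) (G₂₁ : Subgroup G₂)
    (G₁₂ : Subgroup G₁₁) [G₁₂.Normal] (G₂₂ : Subgroup G₂₁) [G₂₂.Normal]
    (ψ : (G₁₁ ⧸ G₁₂) ≃* (G₂₁ ⧸ G₂₂)) :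
    (goursatSubgroup G₁₁ G₂₁ G₁₂ G₂₂ ψ).Normal ↔
      (G₁₁.Normal ∧ (G₁₂.map G₁₁.subtype).Normal ∧
        ∀ g ∈ G₁₁, ∀ x : G₁, g * x * g⁻¹ * x⁻¹ ∈ G₁₂.map G₁₁.subtype) ∧
      (G₂₁.Normal ∧ (G₂₂.map G₂₁.subtype).Normal ∧
        ∀ g ∈ G₂₁, ∀ x : G₂, g * x * g⁻¹ * x⁻¹ ∈ G₂₂.map G₂₁.subtype) := by
  set H := goursatSubgroup G₁₁ G₂₁ G₁₂ G₂₂ ψ with hHdef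
  constructor
  · intro hH
    -- helper: pairing
    have pair1 : ∀ g (hg : g ∈ G₁₁), ∃ b, (g, b) ∈ H := by
      intro g hg
      obtain ⟨b, hb⟩ := Quotient.exists_rep (ψ (QuotientGroup.mk ⟨g, hg⟩))
      exact ⟨(b : G₂), mem_goursat.2 ⟨hg, b.2, hb.symm⟩⟩
    have pair2 : ∀ g (hg : g ∈ G₂₁), ∃ a, (a, g) ∈ H := by
      intro g hg
      obtain ⟨a, ha⟩ := Quotient.exists_rep (ψ.symm (QuotientGroup.mk ⟨g, hg⟩))
      refine ⟨(a : G₁), mem_goursat.2 ⟨a.2, hg, ?_⟩⟩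
      rw [show (QuotientGroup.mk a : G₁₁ ⧸ G₁₂) = ψ.symm (QuotientGroup.mk ⟨g, hg⟩) from ha]
      simp
    have conj1 : ∀ a b, (a, b) ∈ H → ∀ x : G₁, (x * a * x⁻¹, b) ∈ H := by
      intro a b hab x
      have := hH.conj_mem (a, b) hab (x, 1)
      simpa using this
    have conj2 : ∀ a b, (a, b) ∈ H → ∀ x : G₂, (a, x * b * x⁻¹) ∈ H := by
      intro a b hab x
      have := hH.conj_mem (a, b) hab (1, x)
      simpa using this
    -- membership of (g,1) in H characterizes G₁₂
    have mem12 : ∀ g : G₁, (g, 1) ∈ H → g ∈ G₁₂.map G₁₁.subtype := by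
      intro g hg
      obtain ⟨ha, hb, h⟩ := mem_goursat.1 hg
      have h1 : (⟨(1:G₂), hb⟩ : G₂₁) = 1 := rfl
      rw [h1, QuotientGroup.mk_one] at h
      have : (QuotientGroup.mk (⟨g, ha⟩ : G₁₁) : G₁₁ ⧸ G₁₂) = 1 := by
        apply ψ.injective; simpa using h
      exact (memMapSubtype ha).2 ((QuotientGroup.eq_one_iff _).1 this)
    have mem22 : ∀ g : G₂, ((1 : G₁), g) ∈ H → g ∈ G₂₂.map G₂₁.subtype := by
      intro g hg
      obtain ⟨ha, hb, h⟩ := mem_goursat.1 hg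
      have h1 : (⟨(1:G₁), ha⟩ : G₁₁) = 1 := rfl
      rw [h1, QuotientGroup.mk_one] at h
      simp at h
      exact (memMapSubtype hb).2 ((QuotientGroup.eq_one_iff _).1 h.symm)
    refine ⟨⟨?_, ⟨?_⟩, ?_⟩, ?_, ⟨?_⟩, ?_⟩
    · constructor
      intro g hg x
      obtain ⟨b, hmem⟩ := pair1 g hg
      exact (mem_goursat.1 (conj1 g b hmem x)).1
    · intro g hg x
      obtain ⟨g', hg', rfl⟩ := hg
      have hmemH : ((g' : G₁), (1 : G₂)) ∈ H := by
        refine mem_goursat.2 ⟨g'.2, G₂₁.one_mem, ?_⟩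
        have : (QuotientGroup.mk (⟨(g' : G₁), g'.2⟩ : G₁₁) : G₁₁ ⧸ G₁₂) = 1 :=
          (QuotientGroup.eq_one_iff _).2 (by simpa using hg')
        rw [this]
        simp
        rfl
      exact mem12 _ (conj1 _ _ hmemH x)
    · intro g hg x
      obtain ⟨b, hmem⟩ := pair1 g hg
      have h1 : (x * g * x⁻¹, b) ∈ H := conj1 g b hmem x
      have h2 : (x * g * x⁻¹ * g⁻¹, 1) ∈ H := by
        have := H.mul_mem h1 (H.inv_mem hmem)
        simpa using this
      have h3 := mem12 _ h2
      have h4 := (G₁₂.map G₁₁.subtype).inv_mem h3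
      simpa [mul_assoc] using h4
    · constructor
      intro g hg x
      obtain ⟨a, hmem⟩ := pair2 g hg
      exact (mem_goursat.1 (conj2 a g hmem x)).2.1
    · intro g hg x
      obtain ⟨g', hg', rfl⟩ := hg
      have hmemH : ((1 : G₁), (g' : G₂)) ∈ H := by
        refine mem_goursat.2 ⟨G₁₁.one_mem, g'.2, ?_⟩
        have : (QuotientGroup.mk (⟨(g' : G₂), g'.2⟩ : G₂₁) : G₂₁ ⧸ G₂₂) = 1 :=
          (QuotientGroup.eq_one_iff _).2 (by simpa using hg')
        rw [this]
        have h1 : (⟨(1:G₁), G₁₁.one_mem⟩ : G₁₁) = 1 := rfl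
        rw [h1]
        simp
      exact mem22 _ (conj2 _ _ hmemH x)
    · intro g hg x
      obtain ⟨a, hmem⟩ := pair2 g hg
      have h1 : (a, x * g * x⁻¹) ∈ H := conj2 a g hmem x
      have h2 : ((1 : G₁), x * g * x⁻¹ * g⁻¹) ∈ H := by
        have := H.mul_mem h1 (H.inv_mem hmem)
        simpa using this
      have h3 := mem22 _ h2
      have h4 := (G₂₂.map G₂₁.subtype).inv_mem h3
      simpa [mul_assoc] using h4
  · rintro ⟨⟨h1n, h12n, h1c⟩, h2n, h22n, h2c⟩
    constructor
    rintro ⟨a, b⟩ hab ⟨x₁, x₂⟩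
    obtain ⟨ha, hb, heq⟩ := mem_goursat.1 hab
    have ha' : x₁ * a * x₁⁻¹ ∈ G₁₁ := h1n.conj_mem a ha x₁
    have hb' : x₂ * b * x₂⁻¹ ∈ G₂₁ := h2n.conj_mem b hb x₂
    have key1 : (QuotientGroup.mk (⟨x₁ * a * x₁⁻¹, ha'⟩ : G₁₁) : G₁₁ ⧸ G₁₂) =
        QuotientGroup.mk ⟨a, ha⟩ := by
      rw [QuotientGroup.eq]
      have hc := h1c a⁻¹ (G₁₁.inv_mem ha) x₁
      have hc2 := (G₁₂.map G₁₁.subtype).inv_mem hc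
      refine (memMapSubtype (((⟨x₁ * a * x₁⁻¹, ha'⟩ : G₁₁))⁻¹ * ⟨a, ha⟩).2).1 ?_
      convert hc2 using 1
      push_cast
      group
    have key2 : (QuotientGroup.mk (⟨x₂ * b * x₂⁻¹, hb'⟩ : G₂₁) : G₂₁ ⧸ G₂₂) =
        QuotientGroup.mk ⟨b, hb⟩ := by
      rw [QuotientGroup.eq]
      have hc := h2c b⁻¹ (G₂₁.inv_mem hb) x₂
      have hc2 := (G₂₂.map G₂₁.subtype).inv_mem hc
      refine (memMapSubtype (((⟨x₂ * b * x₂⁻¹, hb'⟩ : G₂₁))⁻¹ * ⟨b, hb⟩).2).1 ?_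
      convert hc2 using 1
      push_cast
      group
    have : ((x₁, x₂) * (a, b) * (x₁, x₂)⁻¹ : G₁ × G₂) = (x₁ * a * x₁⁻¹, x₂ * b * x₂⁻¹) := rfl
    rw [this]
    exact mem_goursat.2 ⟨ha', hb', by rw [key1, key2, heq]⟩
end

section
/- Let H₁ be an m₁ × n₁ matrix and H₂ an m₂ × n₂ matrix over 𝔽₂ = ZMod 2. Define the hypergraph-product parity-check matrices as the block matrices H_X = [ H₁ ⊗ I_{n₂} | I_{m₁} ⊗ H₂ᵀ ] (of size m₁n₂ × (n₁n₂ + m₁m₂)) and H_Z = [ I_{n₁} ⊗ H₂ | H₁ᵀ ⊗ I_{m₂} ] (of size n₁m₂ × (n₁n₂ + m₁m₂)), where ⊗ denotes the Kronecker product and the two column blocks are indexed by (Fin n₁ × Fin n₂) and (Fin m₁ × Fin m₂) respectively. Then H_X · H_Zᵀ = 0; that is, the hypergraph product of any two linear codes defines a valid CSS code. -/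
open Kronecker

namespace Matrix

variable {R : Type*} [CommSemiring R] {ι₁ κ₁ ι₂ κ₂ : Type*}
  [Fintype ι₁] [Fintype κ₁] [Fintype ι₂] [Fintype κ₂]
  [DecidableEq ι₁] [DecidableEq κ₁] [DecidableEq ι₂] [DecidableEq κ₂]

/-- With `-H₁ᵀ ⊗ I` as the second block of `H_Z` the two terms would cancel over any commutative
ring; over `𝔽₂` no sign is needed. -/
theorem hypergraphProduct_mul_transpose (H₁ : Matrix ι₁ κ₁ R) (H₂ : Matrix ι₂ κ₂ R) :
    fromCols (H₁ ⊗ₖ (1 : Matrix κ₂ κ₂ R)) ((1 : Matrix ι₁ ι₁ R) ⊗ₖ H₂ᵀ)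
        * (fromCols ((1 : Matrix κ₁ κ₁ R) ⊗ₖ H₂) (H₁ᵀ ⊗ₖ (1 : Matrix ι₂ ι₂ R)))ᵀ
      = H₁ ⊗ₖ H₂ᵀ + H₁ ⊗ₖ H₂ᵀ := by
  rw [transpose_fromCols, fromCols_mul_fromRows, ← kroneckerMap_transpose,
    ← kroneckerMap_transpose, transpose_one, transpose_one, transpose_transpose,
    ← mul_kronecker_mul, ← mul_kronecker_mul]
  simp only [Matrix.mul_one, Matrix.one_mul]

end Matrix

/-- The hypergraph product of two classical linear codes is a valid CSS code: for any
parity-check matrices `H₁` (of size `m₁ × n₁`) and `H₂` (of size `m₂ × n₂`) over `𝔽₂`,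
the block Kronecker-product matrices `H_X = [H₁ ⊗ I_{n₂} | I_{m₁} ⊗ H₂ᵀ]` and
`H_Z = [I_{n₁} ⊗ H₂ | H₁ᵀ ⊗ I_{m₂}]` satisfy `H_X · H_Zᵀ = 0`. -/
theorem hypergraphProduct_css (m₁ n₁ m₂ n₂ : ℕ)
    (H₁ : Matrix (Fin m₁) (Fin n₁) (ZMod 2)) (H₂ : Matrix (Fin m₂) (Fin n₂) (ZMod 2)) :
    Matrix.fromCols (H₁ ⊗ₖ (1 : Matrix (Fin n₂) (Fin n₂) (ZMod 2)))
        ((1 : Matrix (Fin m₁) (Fin m₁) (ZMod 2)) ⊗ₖ H₂.transpose)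
      * (Matrix.fromCols ((1 : Matrix (Fin n₁) (Fin n₁) (ZMod 2)) ⊗ₖ H₂)
          (H₁.transpose ⊗ₖ (1 : Matrix (Fin m₂) (Fin m₂) (ZMod 2)))).transpose
      = 0 := by
  rw [Matrix.hypergraphProduct_mul_transpose]
  ext i j
  exact CharTwo.add_self_eq_zero _
end
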